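/- Let Λ = ⟨ρ_0,σ_0⟩,…,⟨ρ_n,σ_n⟩ be a cyclicity prefix for a rule set R, a head-choice hc, and a rule ρ ∈ R, and let K = ⟨R,D_ρ⟩. Then the infinite sequence Λ^∞ is loaded for K and hc; in particular, g_Λ(F_{(j-1)·n+i}(K,hc,Λ^∞)) ⊆ F_{j·n+i}(K,hc,Λ^∞) for all 1 ≤ i ≤ n and j ≥ 1. -/

import Mathlib

set_option maxHeartbeats 1000000

namespace DisjChase

open scoped Classical
noncomputable section

/-! ### Basic syntax -/

abbrev Var := ℕ
abbrev Pred := ℕ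

/-- An atom over a type of terms `T`. -/
structure Atom (T : Type) where
  pred : Pred
  args : List T
deriving DecidableEq

def Atom.map {S T : Type} (f : S → T) (a : Atom S) : Atom T :=
  ⟨a.pred, a.args.map f⟩

/-- A (disjunctive existential) rule: a nonempty body and a nonempty list of
nonempty head conjunctions, all constant- and function-free (atoms over variables). -/
structure Rule where
  body : List (Atom Var)
  heads : List (List (Atom Var))
  body_ne : body ≠ []
  heads_ne : heads ≠ []
  heads_conj_ne : ∀ h ∈ heads, h ≠ []

def Rule.branching (ρ : Rule) : ℕ := ρ.heads.length

def Rule.bodyVars (ρ : Rule) : List Var := (ρ.body.map Atom.args).flatten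

/-- The frontier of a rule: the body variables that also occur in some head disjunct. -/
def Rule.frontierList (ρ : Rule) : List Var :=
  (ρ.bodyVars.filter fun x => ρ.heads.any fun h => h.any fun a => a.args.contains x).dedup

/-- A rule is datalog if it is deterministic and has no existentially quantified variables. -/
def Rule.Datalog (ρ : Rule) : Prop :=
  ρ.branching = 1 ∧ ∀ h ∈ ρ.heads, ∀ a ∈ h, ∀ x ∈ a.args, x ∈ ρ.bodyVars

/-- A rule is deterministic if it has exactly one head disjunct. -/
def Rule.Deterministic (ρ : Rule) : Prop := ρ.branching = 1

/-- Constants: the special constant `⋆`, ordinary constants, the fresh constants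
`c_f` (one for each skolem function symbol `f = f^ρ_{i,y}`), and the fresh constants
`c_x` (one for each variable `x`, used by `σ_uc`). -/
inductive Const where
  | star : Const
  | nat : ℕ → Const
  | skolemConst : Rule → ℕ → Var → Const
  | varConst : Var → Const

/-- Ground terms: built from constants and the skolem function symbols `f^ρ_{i,y}`. -/
inductive GTerm where
  | const : Const → GTerm
  | func : Rule → ℕ → Var → List GTerm → GTerm

def GTerm.isFunctional : GTerm → Prop
  | .const _ => False
  | .func _ _ _ _ => True

/-- `GTerm.Subterm s t` : `s` is a subterm of `t`. -/
inductive GTerm.Subterm : GTerm → GTerm → Prop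
  | refl (t : GTerm) : GTerm.Subterm t t
  | func {u s : GTerm} {args : List GTerm} (ρ : Rule) (i : ℕ) (y : Var) :
      s ∈ args → GTerm.Subterm u s → GTerm.Subterm u (GTerm.func ρ i y args)

def GTerm.depth : GTerm → ℕ
  | .const _ => 1
  | .func _ _ _ args => 1 + (args.attach.map fun t => GTerm.depth t.1).foldr max 0
termination_by t => sizeOf t
decreasing_by
  have := List.sizeOf_lt_of_mem t.2
  simp only [GTerm.func.sizeOf_spec]
  omega

/-- A term is cyclic if it has a subterm of the form `f(s⃗)` with `f` occurring in `s⃗`. -/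
def GTerm.Cyclic (t : GTerm) : Prop :=
  ∃ (ρ : Rule) (i : ℕ) (y : Var) (args : List GTerm),
    GTerm.Subterm (GTerm.func ρ i y args) t ∧
    ∃ s ∈ args, ∃ args' : List GTerm, GTerm.Subterm (GTerm.func ρ i y args') s

/-- A `ρ`-cyclic term: a term `f(s⃗)` with `f` a function symbol of `sk(ρ)`
occurring also in `s⃗`. -/
def RuleCyclic (ρ : Rule) (t : GTerm) : Prop :=
  ∃ (i : ℕ) (y : Var) (args : List GTerm), t = GTerm.func ρ i y args ∧
    ∃ s ∈ args, ∃ args' : List GTerm, GTerm.Subterm (GTerm.func ρ i y args') s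

/-! ### Substitutions, facts, triggers -/

abbrev Subst := Var → GTerm
abbrev Fact := Atom GTerm
abbrev FactSet := Set Fact

/-- The substitution mapping every variable `x` to the fresh constant `c_x`. -/
def sigmaUC : Subst := fun x => GTerm.const (Const.varConst x)

structure Trigger where
  rule : Rule
  subst : Subst

/-- The skolemizing substitution for disjunct `i`: body variables are mapped by `σ`,
existential variables `y` to the skolem term `f^ρ_{i,y}` applied to the frontier images. -/
def skolemSubst (ρ : Rule) (i : ℕ) (σ : Subst) : Subst := fun y =>
  if y ∈ ρ.bodyVars then σ y
  else GTerm.func ρ i y (ρ.frontierList.map σ)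

/-- `out_i(λ) = η_i(sk(ρ))σ` (0-indexed disjuncts). -/
def Trigger.out (lam : Trigger) (i : ℕ) : FactSet :=
  { f | ∃ a ∈ lam.rule.heads.getD i [], f = a.map (skolemSubst lam.rule i lam.subst) }

def Trigger.outUnion (lam : Trigger) : FactSet :=
  { f | ∃ i < lam.rule.branching, f ∈ lam.out i }

def Trigger.Loaded (lam : Trigger) (F : FactSet) : Prop :=
  ∀ a ∈ lam.rule.body, a.map lam.subst ∈ F

def Trigger.Obsolete (lam : Trigger) (F : FactSet) : Prop :=
  ∃ h ∈ lam.rule.heads, ∃ σ' : Subst,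
    (∀ x ∈ lam.rule.bodyVars, σ' x = lam.subst x) ∧ ∀ a ∈ h, a.map σ' ∈ F

/-- A fact set satisfies a rule if all triggers with this rule are not loaded or obsolete. -/
def SatisfiesRule (F : FactSet) (ρ : Rule) : Prop :=
  ∀ σ : Subst, Trigger.Loaded ⟨ρ, σ⟩ F → Trigger.Obsolete ⟨ρ, σ⟩ F

/-- A ground term is over a rule set if all its function symbols come from
the skolemization of the rule set. -/
inductive GTerm.Over (R : Set Rule) : GTerm → Prop
  | const (c : Const) : GTerm.Over R (GTerm.const c)
  | func {ρ : Rule} {i : ℕ} {y : Var} {args : List GTerm} :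
      ρ ∈ R → (∀ t ∈ args, GTerm.Over R t) → GTerm.Over R (GTerm.func ρ i y args)

def RTrigger (R : Set Rule) (lam : Trigger) : Prop :=
  lam.rule ∈ R ∧ ∀ x : Var, (lam.subst x).Over R

/-- A function-free fact set (i.e., a database). -/
def FunctionFree (F : FactSet) : Prop :=
  ∀ a ∈ F, ∀ t ∈ a.args, ∃ c : Const, t = GTerm.const c

/-! ### Chase trees -/

/-- Iterated edge relation: paths of length `k`. -/
def EPow {V : Type} (E : V → V → Prop) : ℕ → V → V → Prop
  | 0 => Eq
  | n + 1 => fun a c => ∃ b, E a b ∧ EPow E n b c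

/-- A chase tree for the knowledge base `⟨R, D⟩` (restricted chase with datalog priority). -/
structure ChaseTree (R : Set Rule) (D : FactSet) where
  V : Type
  E : V → V → Prop
  fl : V → FactSet
  tl : V → Trigger
  root : V
  reach_root : ∀ v, Relation.ReflTransGen E root v
  no_in_root : ∀ v, ¬ E v root
  parent_unique : ∀ {u w v : V}, E u v → E w v → u = w
  root_label : fl root = D
  expand : ∀ v : V, (∃ c, E v c) →
    ∃ lam : Trigger, RTrigger R lam ∧ lam.Loaded (fl v) ∧ ¬ lam.Obsolete (fl v) ∧
      (¬ lam.rule.Datalog → ∀ ρ ∈ R, ρ.Datalog → SatisfiesRule (fl v) ρ) ∧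
      ∃ f : Fin lam.rule.branching → V,
        Function.Injective f ∧ (∀ i, E v (f i)) ∧ (∀ c, E v c → ∃ i, c = f i) ∧
        ∀ i : Fin lam.rule.branching, fl (f i) = fl v ∪ lam.out i.1 ∧ tl (f i) = lam
  leaf_sat : ∀ v : V, (∀ c, ¬ E v c) → ∀ ρ ∈ R, SatisfiesRule (fl v) ρ
  fairness : ∀ lam : Trigger, RTrigger R lam → ∀ v : V, lam.Loaded (fl v) →
    ∃ k : ℕ, ∀ u : V, EPow E k v u → lam.Obsolete (fl u)

/-- A branch of a chase tree: a maximal path starting at the root. -/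
structure Branch {R : Set Rule} {D : FactSet} (T : ChaseTree R D) where
  seq : ℕ → Option T.V
  head : seq 0 = some T.root
  step_some : ∀ n v w, seq n = some v → seq (n + 1) = some w → T.E v w
  step_max : ∀ n v, seq n = some v → (∃ c, T.E v c) → ∃ w, seq (n + 1) = some w
  step_leaf : ∀ n v, seq n = some v → (∀ c, ¬ T.E v c) → seq (n + 1) = none
  step_none : ∀ n, seq n = none → seq (n + 1) = none

/-- The result of a chase tree: the unions of the fact labels along its branches. -/
def ChaseTree.result {R : Set Rule} {D : FactSet} (T : ChaseTree R D) : Set FactSet :=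
  { S | ∃ b : Branch T, S = { f | ∃ n v, b.seq n = some v ∧ f ∈ T.fl v } }

/-- A rule set never-terminates if some knowledge base with this rule set
admits no finite chase tree. -/
def NeverTerminates (R : Set Rule) : Prop :=
  ∃ D : FactSet, FunctionFree D ∧ ¬ ∃ T : ChaseTree R D, Finite T.V

/-! ### Head-choices and cyclicity sequences -/

/-- A head-choice maps every rule of `R` to one of its (1-indexed) disjuncts. -/
def IsHeadChoice (R : Set Rule) (hc : Rule → ℕ) : Prop :=
  ∀ ρ ∈ R, 1 ≤ hc ρ ∧ hc ρ ≤ ρ.branching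

def outHC (hc : Rule → ℕ) (lam : Trigger) : FactSet := lam.out (hc lam.rule - 1)

/-- `b` is the branch `branch(T,hc)` of `T`: every successive label is the parent's
label united with `out_hc` of the applied trigger. -/
def IsHcBranch {R : Set Rule} {D : FactSet} (T : ChaseTree R D) (hc : Rule → ℕ)
    (b : Branch T) : Prop :=
  ∀ n v w, b.seq n = some v → b.seq (n + 1) = some w →
    T.fl w = T.fl v ∪ outHC hc (T.tl w)

/-- `λ` is g-unblockable for `⟨R,D⟩` and `hc`. -/
def GUnblockable (R : Set Rule) (D : FactSet) (hc : Rule → ℕ) (lam : Trigger) : Prop :=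
  ∀ T : ChaseTree R D, ∀ b : Branch T, IsHcBranch T hc b →
    ∀ n v, b.seq n = some v → lam.Loaded (T.fl v) →
      ∃ m u, b.seq m = some u ∧ outHC hc lam ⊆ T.fl u

/-- `F_i(K, hc, Λ)` for a sequence `Λ` of triggers (0-indexed: `Λ k` is applied to `F_k`). -/
def chaseSeq (D : FactSet) (hc : Rule → ℕ) (Λ : ℕ → Trigger) : ℕ → FactSet
  | 0 => D
  | n + 1 => chaseSeq D hc Λ n ∪ outHC hc (Λ n)

def SeqLoaded (D : FactSet) (hc : Rule → ℕ) (Λ : ℕ → Trigger) : Prop :=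
  ∀ n, (Λ n).Loaded (chaseSeq D hc Λ n)

/-- `t` occurs in the fact set `F`. -/
def GTerm.OccursIn (t : GTerm) (F : FactSet) : Prop :=
  ∃ a ∈ F, ∃ s ∈ a.args, t.Subterm s

def SeqGrowing (D : FactSet) (hc : Rule → ℕ) (Λ : ℕ → Trigger) : Prop :=
  ∀ i, ∃ j, i < j ∧ ∃ t : GTerm,
    t.OccursIn (chaseSeq D hc Λ j) ∧ ¬ t.OccursIn (chaseSeq D hc Λ i)

/-- A cyclicity sequence: an (infinite) sequence of `R`-triggers that is loaded,
growing, and g-unblockable. -/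
def CyclicitySequence (R : Set Rule) (D : FactSet) (hc : Rule → ℕ) (Λ : ℕ → Trigger) : Prop :=
  (∀ n, RTrigger R (Λ n)) ∧ SeqLoaded D hc Λ ∧ SeqGrowing D hc Λ ∧
    ∀ n, GUnblockable R D hc (Λ n)

/-! ### Over-approximations and unblockability -/

/-- `F` is an over-approximation of `R` and `hc` before `λ`. -/
def IsOverApprox (R : Set Rule) (hc : Rule → ℕ) (lam : Trigger) (F : FactSet) : Prop :=
  ∃ h : GTerm → GTerm,
    (∀ x ∈ lam.rule.frontierList, h (lam.subst x) = lam.subst x) ∧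
    ∀ D : FactSet, FunctionFree D → ∀ T : ChaseTree R D, ∀ b : Branch T,
      IsHcBranch T hc b → ∀ n u, b.seq n = some u → ¬ outHC hc lam ⊆ T.fl u →
        (Atom.map h) '' (T.fl u) ⊆ F

/-- The substitution mapping the frontier of `ρ` (in order) to the given argument list. -/
def frontierSubst (ρ : Rule) (args : List GTerm) : Subst := fun x =>
  args.getD (ρ.frontierList.idxOf x) (GTerm.const Const.star)

/-- Birth facts of a term. -/
def GTerm.births : GTerm → FactSet
  | .const _ => ∅
  | .func ρ i _ args =>
      Trigger.out ⟨ρ, frontierSubst ρ args⟩ i ∪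
        (args.attach.map fun s => GTerm.births s.1).foldr (· ∪ ·) ∅
termination_by t => sizeOf t
decreasing_by
  have := List.sizeOf_lt_of_mem s.2
  simp only [GTerm.func.sizeOf_spec]
  omega

/-- Birth facts of a trigger. -/
def Trigger.births (lam : Trigger) : FactSet :=
  { f | ∃ x ∈ lam.rule.frontierList, f ∈ GTerm.births (lam.subst x) }

/-- The term-skeleton of a trigger: the terms occurring in its birth facts together
with the constants in frontier positions. -/
def skel (lam : Trigger) : Set GTerm :=
  { t | ∃ a ∈ lam.births, ∃ s ∈ a.args, t.Subterm s } ∪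
  { t | ∃ x ∈ lam.rule.frontierList, lam.subst x = t ∧ ∃ c, t = GTerm.const c }

/-- `h^⋆_λ`. -/
def hstar (lam : Trigger) : GTerm → GTerm := fun t =>
  if t ∈ skel lam then t else GTerm.const Const.star

/-- `h^uc_λ`. -/
def huc (lam : Trigger) : GTerm → GTerm := fun t =>
  if t ∈ skel lam then t
  else
    match t with
    | GTerm.func ρ i y _ => GTerm.const (Const.skolemConst ρ i y)
    | GTerm.const (Const.skolemConst ρ i y) => GTerm.const (Const.skolemConst ρ i y)
    | _ => GTerm.const Const.star

def hImg (h : GTerm → GTerm) (F : FactSet) : FactSet := (Atom.map h) '' F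

def predsOf (R : Set Rule) : Set Pred :=
  { p | ∃ ρ ∈ R, (∃ a ∈ ρ.body, a.pred = p) ∨ ∃ h ∈ ρ.heads, ∃ a ∈ h, a.pred = p }

def skelConsts (lam : Trigger) : Set Const :=
  { c | ∃ t ∈ skel lam, GTerm.Subterm (GTerm.const c) t }

/-- All facts over a predicate of `R` and constants from `skel(λ) ∪ {⋆}`. -/
def baseFacts (R : Set Rule) (lam : Trigger) : FactSet :=
  { a | a.pred ∈ predsOf R ∧
    ∀ t ∈ a.args, ∃ c : Const, t = GTerm.const c ∧ (c ∈ skelConsts lam ∨ c = Const.star) }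

def Oclosed (R : Set Rule) (hc : Rule → ℕ) (lam : Trigger) (h : GTerm → GTerm)
    (F : FactSet) : Prop :=
  baseFacts R lam ⊆ F ∧ lam.births ⊆ F ∧
  ∀ lam' : Trigger, RTrigger R lam' → lam'.Loaded F → outHC hc lam' ≠ outHC hc lam →
    hImg h (outHC hc lam') ⊆ F

/-- `O(R, hc, λ, h)`. -/
def Oset (R : Set Rule) (hc : Rule → ℕ) (lam : Trigger) (h : GTerm → GTerm) : FactSet :=
  ⋂₀ { F | Oclosed R hc lam h F }

def OclosedND (R : Set Rule) (lam : Trigger) (h : GTerm → GTerm) (F : FactSet) : Prop :=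
  baseFacts R lam ⊆ F ∧ lam.births ⊆ F ∧
  ∀ lam' : Trigger, RTrigger R lam' → lam'.Loaded F →
    (lam'.rule = lam.rule → ∃ i < lam.rule.branching, lam'.out i ≠ lam.out i) →
    hImg h lam'.outUnion ⊆ F

/-- `O(R, λ, h)`. -/
def OsetND (R : Set Rule) (lam : Trigger) (h : GTerm → GTerm) : FactSet :=
  ⋂₀ { F | OclosedND R lam h F }

/-- `λ` is `⋆`-unblockable for `R`. -/
def StarUnblockable (R : Set Rule) (lam : Trigger) : Prop :=
  lam.rule.Datalog ∨ ¬ lam.Obsolete (OsetND R lam (hstar lam))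

/-- `λ` is `uc`-unblockable for `R` and `hc`. -/
def UcUnblockable (R : Set Rule) (hc : Rule → ℕ) (lam : Trigger) : Prop :=
  lam.rule.Datalog ∨ ¬ lam.Obsolete (Oset R hc lam (huc lam))

/-! ### Constant mappings and reversibility -/

abbrev CMap := Const → Option GTerm

/-- Apply a constant mapping to a ground term, replacing constants in its domain. -/
def applyCM (g : CMap) : GTerm → GTerm
  | .const c => (g c).getD (GTerm.const c)
  | .func ρ i y args => GTerm.func ρ i y (args.attach.map fun s => applyCM g s.1)
termination_by t => sizeOf t
decreasing_by
  have := List.sizeOf_lt_of_mem s.2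
  simp only [GTerm.func.sizeOf_spec]
  omega

/-- `g` is reversible for the (subterm-closed) set of terms `𝒯`. -/
def Reversible (g : CMap) (𝒯 : Set GTerm) : Prop :=
  (∀ c : Const, GTerm.const c ∈ 𝒯 → (g c).isSome) ∧
  (∀ t ∈ 𝒯, ∀ s ∈ 𝒯, t ≠ s → applyCM g t ≠ applyCM g s) ∧
  (∀ c : Const, GTerm.const c ∈ 𝒯 →
    ∀ s : GTerm, s.Subterm (applyCM g (GTerm.const c)) →
      ∀ u ∈ 𝒯, u.isFunctional → applyCM g u ≠ s)

def cmImg (g : CMap) (F : FactSet) : FactSet := (Atom.map (applyCM g)) '' F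

/-! ### Cyclicity prefixes -/

/-- The rule-database `D_ρ = body(ρ)σ_uc`. -/
def ruleDB (ρ : Rule) : FactSet := { f | ∃ a ∈ ρ.body, f = a.map sigmaUC }

/-- A cyclicity prefix for `R`, `hc`, and `ρ ∈ R`. -/
structure CyclicityPrefix (R : Set Rule) (hc : Rule → ℕ) (ρ : Rule) where
  n : ℕ
  npos : 0 < n
  trig : ℕ → Trigger
  g : CMap
  rtrig : ∀ i ≤ n, RTrigger R (trig i)
  first_rule : (trig 0).rule = ρ
  first_subst : (trig 0).subst = sigmaUC
  loaded : ∀ i ≤ n, (trig i).Loaded (chaseSeq (ruleDB ρ) hc trig i)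
  uc_unbl : ∀ i, 1 ≤ i → i ≤ n → UcUnblockable R hc (trig i)
  g_unbl : GUnblockable R (ruleDB ρ) hc (trig 0)
  last_rule : (trig n).rule = ρ
  last_cyclic : ∃ t : GTerm, RuleCyclic ρ t ∧ t.OccursIn (outHC hc (trig n))
  g_comp : applyCM g ∘ (trig 0).subst = (trig n).subst
  g_rev : ∀ i, 1 ≤ i → i ≤ n → ∀ j : ℕ,
    Reversible g (skel ⟨(trig i).rule, (applyCM g)^[j] ∘ (trig i).subst⟩)

/-- The infinite sequence `Λ^∞` obtained by unfolding a cyclicity prefix. -/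
def prefixInf {R : Set Rule} {hc : Rule → ℕ} {ρ : Rule} (P : CyclicityPrefix R hc ρ) :
    ℕ → Trigger := fun k =>
  if k = 0 then P.trig 0
  else ⟨(P.trig ((k - 1) % P.n + 1)).rule,
        (applyCM P.g)^[(k - 1) / P.n] ∘ (P.trig ((k - 1) % P.n + 1)).subst⟩

/-! ### RPC, RPC_s, DRPC -/

def RPCclosed (R : Set Rule) (hc : Rule → ℕ) (ρ : Rule) (F : FactSet) : Prop :=
  ruleDB ρ ⊆ F ∧ outHC hc ⟨ρ, sigmaUC⟩ ⊆ F ∧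
  ∀ lam : Trigger, RTrigger R lam →
    (∀ x ∈ lam.rule.bodyVars, ¬ (lam.subst x).Cyclic) →
    lam.Loaded F → UcUnblockable R hc lam →
    (lam.rule = ρ → Set.InjOn lam.subst { x | x ∈ lam.rule.bodyVars }) →
    outHC hc lam ⊆ F

/-- `RPC(R, hc, ρ)`. -/
def RPCset (R : Set Rule) (hc : Rule → ℕ) (ρ : Rule) : FactSet :=
  ⋂₀ { F | RPCclosed R hc ρ F }

/-- `R` is restricted prefix-cyclic. -/
def IsRPC (R : Set Rule) : Prop :=
  ∃ hc : Rule → ℕ, IsHeadChoice R hc ∧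
    ∃ ρ ∈ R, ∃ t : GTerm, RuleCyclic ρ t ∧ t.OccursIn (RPCset R hc ρ)

/-- The head-choice `hc_i`. -/
def hcIdx (i : ℕ) : Rule → ℕ := fun ρ => if i ≤ ρ.branching then i else ρ.branching

/-- `branching(R)`: the least bound on the branching of the rules of `R`. -/
def branchingR (R : Set Rule) : ℕ := sInf { b | ∀ ρ ∈ R, ρ.branching ≤ b }

/-- `R` is `RPC_s`. -/
def IsRPCs (R : Set Rule) : Prop :=
  ∃ i : ℕ, 1 ≤ i ∧ i ≤ branchingR R ∧
    ∃ ρ ∈ R, ∃ t : GTerm, RuleCyclic ρ t ∧ t.OccursIn (RPCset R (hcIdx i) ρ)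

def DRPCclosed (R : Set Rule) (ρ : Rule) (F : FactSet) : Prop :=
  ruleDB ρ ⊆ F ∧ Trigger.out ⟨ρ, sigmaUC⟩ 0 ⊆ F ∧
  ∀ lam : Trigger, RTrigger R lam → lam.rule.Deterministic →
    (∀ x ∈ lam.rule.bodyVars, ¬ (lam.subst x).Cyclic) →
    lam.Loaded F → StarUnblockable R lam →
    (lam.rule = ρ → Set.InjOn lam.subst { x | x ∈ lam.rule.bodyVars }) →
    lam.out 0 ⊆ F

/-- `DRPC(R, ρ)`. -/
def DRPCset (R : Set Rule) (ρ : Rule) : FactSet :=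
  ⋂₀ { F | DRPCclosed R ρ F }

/-- `R` is deterministic restricted prefix-cyclic. -/
def IsDRPC (R : Set Rule) : Prop :=
  ∃ ρ ∈ R, ρ.Deterministic ∧ ∃ t : GTerm, RuleCyclic ρ t ∧ t.OccursIn (DRPCset R ρ)


/-! ### Auxiliary lemmas -/

lemma Trigger.ext' {a b : Trigger} (h1 : a.rule = b.rule) (h2 : a.subst = b.subst) :
    a = b := by
  cases a; cases b; cases h1; cases h2; rfl

lemma Atom.map_map' {S T U : Type} (f : S → T) (g : T → U) (a : Atom S) :
    Atom.map g (Atom.map f a) = Atom.map (g ∘ f) a := by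
  simp [Atom.map, List.map_map]

lemma applyCM_func (g : CMap) (ρ : Rule) (i : ℕ) (y : Var) (args : List GTerm) :
    applyCM g (GTerm.func ρ i y args) = GTerm.func ρ i y (args.map (applyCM g)) := by
  rw [applyCM]
  congr 1
  rw [List.map_attach_eq_pmap]
  simp [List.pmap_eq_map]

lemma skolemSubst_comp (g : CMap) (ρ : Rule) (i : ℕ) (σ : Subst) :
    skolemSubst ρ i (applyCM g ∘ σ) = applyCM g ∘ skolemSubst ρ i σ := by
  funext y
  simp only [skolemSubst, Function.comp]
  split
  · rfl
  · rw [applyCM_func, List.map_map]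

lemma out_comp (g : CMap) (r : Rule) (σ : Subst) (i : ℕ) :
    cmImg g (Trigger.out ⟨r, σ⟩ i) = Trigger.out ⟨r, applyCM g ∘ σ⟩ i := by
  ext f
  simp only [cmImg, Trigger.out, Set.mem_image, Set.mem_setOf_eq]
  constructor
  · rintro ⟨f', ⟨a, ha, rfl⟩, rfl⟩
    exact ⟨a, ha, by rw [Atom.map_map', skolemSubst_comp]⟩
  · rintro ⟨a, ha, rfl⟩
    exact ⟨a.map (skolemSubst r i σ), ⟨a, ha, rfl⟩,
      by rw [Atom.map_map', skolemSubst_comp]⟩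

lemma chaseSeq_congr (D : FactSet) (hc : Rule → ℕ) {Λ Λ' : ℕ → Trigger} (k : ℕ)
    (h : ∀ m < k, Λ m = Λ' m) : chaseSeq D hc Λ k = chaseSeq D hc Λ' k := by
  induction k with
  | zero => rfl
  | succ k ih =>
    simp only [chaseSeq]
    rw [ih (fun m hm => h m (by omega)), h k (by omega)]

lemma chaseSeq_mono (D : FactSet) (hc : Rule → ℕ) (Λ : ℕ → Trigger) (k m : ℕ) :
    chaseSeq D hc Λ k ⊆ chaseSeq D hc Λ (k + m) := by
  induction m with
  | zero => exact fun _ h => h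
  | succ m ih => exact fun f hf => Or.inl (ih hf)

lemma prefixInf_eq_trig {R : Set Rule} {hc : Rule → ℕ} {ρ : Rule}
    (P : CyclicityPrefix R hc ρ) {k : ℕ} (h2 : k ≤ P.n) :
    prefixInf P k = P.trig k := by
  rcases Nat.eq_zero_or_pos k with rfl | h1
  · unfold prefixInf; rw [if_pos rfl]
  · unfold prefixInf
    rw [if_neg (by omega)]
    have hm : (k - 1) % P.n = k - 1 := Nat.mod_eq_of_lt (by omega)
    have hd : (k - 1) / P.n = 0 := Nat.div_eq_of_lt (by omega)
    rw [hm, hd, Nat.sub_add_cancel h1]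
    exact Trigger.ext' rfl (by simp)

lemma prefixInf_step {R : Set Rule} {hc : Rule → ℕ} {ρ : Rule}
    (P : CyclicityPrefix R hc ρ) (k : ℕ) :
    prefixInf P (k + P.n) =
      ⟨(prefixInf P k).rule, applyCM P.g ∘ (prefixInf P k).subst⟩ := by
  have hn := P.npos
  rcases Nat.eq_zero_or_pos k with rfl | hk
  · rw [zero_add, prefixInf_eq_trig P le_rfl]
    have h0 : prefixInf P 0 = P.trig 0 := prefixInf_eq_trig P (by omega)
    rw [h0]
    exact Trigger.ext' (P.last_rule.trans P.first_rule.symm) P.g_comp.symm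
  · unfold prefixInf
    rw [if_neg (by omega), if_neg (by omega)]
    have h1 : k + P.n - 1 = (k - 1) + P.n := by omega
    rw [h1, Nat.add_mod_right, Nat.add_div_right _ hn]
    refine Trigger.ext' rfl ?_
    simp only
    rw [Function.iterate_succ']
    rfl

lemma cmImg_outHC {R : Set Rule} {hc : Rule → ℕ} {ρ : Rule}
    (P : CyclicityPrefix R hc ρ) (k : ℕ) :
    cmImg P.g (outHC hc (prefixInf P k)) = outHC hc (prefixInf P (k + P.n)) := by
  rw [prefixInf_step P k]
  unfold outHC
  exact out_comp P.g (prefixInf P k).rule (prefixInf P k).subst _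

lemma cmImg_union (g : CMap) (A B : FactSet) :
    cmImg g (A ∪ B) = cmImg g A ∪ cmImg g B := Set.image_union _ _ _

lemma cmImg_chase {R : Set Rule} {hc : Rule → ℕ} {ρ : Rule}
    (P : CyclicityPrefix R hc ρ) :
    ∀ k, 1 ≤ k → cmImg P.g (chaseSeq (ruleDB ρ) hc (prefixInf P) k) ⊆
      chaseSeq (ruleDB ρ) hc (prefixInf P) (k + P.n) := by
  have hn := P.npos
  have hagree : ∀ m < P.n, prefixInf P m = P.trig m :=
    fun m hm => prefixInf_eq_trig P (by omega)
  have hfn : chaseSeq (ruleDB ρ) hc (prefixInf P) P.n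
      = chaseSeq (ruleDB ρ) hc P.trig P.n := chaseSeq_congr _ _ _ hagree
  intro k hk
  induction k with
  | zero => omega
  | succ k ih =>
    show cmImg P.g (chaseSeq (ruleDB ρ) hc (prefixInf P) k
        ∪ outHC hc (prefixInf P k)) ⊆ _
    rw [cmImg_union]
    rcases Nat.eq_zero_or_pos k with rfl | hk1
    · -- base case k = 0 : F 1 = D ∪ outHC Λ₀
      rintro f (⟨f', hf', rfl⟩ | hf)
      · -- f' ∈ ruleDB ρ
        obtain ⟨a, ha, rfl⟩ := hf'
        rw [Atom.map_map']
        have hcomp : applyCM P.g ∘ sigmaUC = (P.trig P.n).subst := by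
          rw [← P.first_subst]; exact P.g_comp
        rw [hcomp]
        have hload := P.loaded P.n le_rfl
        have hbody : a ∈ (P.trig P.n).rule.body := by rw [P.last_rule]; exact ha
        have hmem := hload a hbody
        rw [← hfn] at hmem
        have : (0 : ℕ) + 1 + P.n = P.n + 1 := by omega
        rw [this]
        exact Or.inl hmem
      · have := (cmImg_outHC P 0) ▸ hf
        have hz : (0 : ℕ) + P.n = P.n := by omega
        rw [hz] at this
        have he : (0 : ℕ) + 1 + P.n = P.n + 1 := by omega
        rw [he]
        exact Or.inr this
    · rintro f (hf | hf)
      · have h1 := ih hk1 hf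
        have : k + P.n ≤ k + 1 + P.n := by omega
        have hsub : chaseSeq (ruleDB ρ) hc (prefixInf P) (k + P.n)
            ⊆ chaseSeq (ruleDB ρ) hc (prefixInf P) (k + 1 + P.n) := by
          have := chaseSeq_mono (ruleDB ρ) hc (prefixInf P) (k + P.n) 1
          have he : k + P.n + 1 = k + 1 + P.n := by omega
          rw [he] at this; exact this
        exact hsub h1
      · have := (cmImg_outHC P k) ▸ hf
        have he : k + 1 + P.n = (k + P.n) + 1 := by omega
        rw [he]
        exact Or.inr this

lemma prefixInf_seqLoaded {R : Set Rule} {hc : Rule → ℕ} {ρ : Rule}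
    (P : CyclicityPrefix R hc ρ) :
    SeqLoaded (ruleDB ρ) hc (prefixInf P) := by
  have hn := P.npos
  intro k
  induction k using Nat.strong_induction_on with
  | _ k ih =>
  by_cases hk : k ≤ P.n
  · -- agrees with the finite prefix
    have hagree : ∀ m < k, prefixInf P m = P.trig m :=
      fun m hm => prefixInf_eq_trig P (by omega)
    rw [chaseSeq_congr _ _ _ hagree, prefixInf_eq_trig P hk]
    exact P.loaded k hk
  · push_neg at hk
    set m := k - P.n with hm
    have hkm : k = m + P.n := by omega
    have hm1 : 1 ≤ m := by omega
    have hstep := prefixInf_step P m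
    intro a ha
    rw [hkm] at ha ⊢
    rw [hstep] at ha ⊢
    simp only at ha ⊢
    rw [← Atom.map_map']
    have hload := ih m (by omega) a ha
    exact cmImg_chase P m hm1 ⟨_, hload, rfl⟩

/-- `Λ^∞` is loaded for `⟨R, D_ρ⟩` and `hc`; in particular
`g_Λ(F_{(j-1)·n+i}) ⊆ F_{j·n+i}` for all `1 ≤ i ≤ n` and `j ≥ 1`. -/
theorem prefixInf_loaded (R : Set Rule) (hc : Rule → ℕ) (ρ : Rule) (hρ : ρ ∈ R)
    (hhc : IsHeadChoice R hc) (P : CyclicityPrefix R hc ρ) :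
    SeqLoaded (ruleDB ρ) hc (prefixInf P) ∧
    ∀ i j : ℕ, 1 ≤ i → i ≤ P.n → 1 ≤ j →
      cmImg P.g (chaseSeq (ruleDB ρ) hc (prefixInf P) ((j - 1) * P.n + i)) ⊆
        chaseSeq (ruleDB ρ) hc (prefixInf P) (j * P.n + i) := by
  refine ⟨prefixInf_seqLoaded P, ?_⟩
  intro i j hi1 hin hj1
  obtain ⟨j', rfl⟩ : ∃ j', j = j' + 1 := ⟨j - 1, by omega⟩
  have h1 : (j' + 1 - 1) * P.n + i = j' * P.n + i := by
    congr 1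
  have h2 : (j' * P.n + i) + P.n = (j' + 1) * P.n + i := by
    rw [Nat.succ_mul]; ring
  rw [h1, ← h2]
  exact cmImg_chase P (j' * P.n + i) (by omega)

end
end DisjChase
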